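/- Let n ≥ 2, let 1 < α < 2, let κ : [-1,1] → [0,∞) be measurable with ∫_{S^{n-1}} κ(v·v') dv = 1 for each v' ∈ S^{n-1}, and let p be a path-length density with tail exponent α and coefficient d₀ > 0. With the scaling θ(ε) = ε^α, the quantity Λ_ε(ξ,v') = ∫_{S^{n-1}} ∫₀^∞ κ(v'·v) p(s) (cos(ε (v·ξ) s) − 1)/θ(ε) ds dv satisfies |Λ_ε(ξ,v')| ≤ c₀ |ξ|^α for all ε ∈ (0,1), all ξ ∈ ℝⁿ, and all v' ∈ S^{n-1}, for a constant c₀ > 0 independent of ε, ξ, v' (one may take c₀ = 1/2 + 2 d₀/α + d₀/(2(2−α)) + 1/2, or any constant of this form depending only on α and d₀). -/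

import Mathlib

open MeasureTheory Metric Filter Set
open scoped ENNReal

noncomputable section

/-- Euclidean space `ℝⁿ`. -/
abbrev Euc (n : ℕ) := EuclideanSpace ℝ (Fin n)

/-- The unit sphere `S^{n-1}` in `ℝⁿ`. -/
abbrev Sph (n : ℕ) := Metric.sphere (0 : Euc n) 1

/-- The normalized surface measure on the unit sphere (total mass `1`): the surface
measure divided by its total mass. -/
noncomputable def sphμ (n : ℕ) : Measure (Sph n) :=
  ((volume : Measure (Euc n)).toSphere Set.univ)⁻¹ • (volume : Measure (Euc n)).toSphere

/-- A path-length density: measurable, nonnegative, integrating to one on `(0,∞)`, with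
finite first moment. -/
def IsPathDensity (p : ℝ → ℝ) : Prop :=
  Measurable p ∧ (∀ s, 0 ≤ p s) ∧ (∫ s in Set.Ioi (0 : ℝ), p s = 1) ∧
    IntegrableOn (fun s => s * p s) (Set.Ioi (0 : ℝ))

/-- A normalized nonnegative angular kernel `κ` on `[-1,1]`:
`∫_{S^{n-1}} κ(v·v') dv = 1` for every `v'`. -/
def IsAngularKernel (n : ℕ) (κ : ℝ → ℝ) : Prop :=
  Measurable κ ∧ (∀ μ ∈ Set.Icc (-1 : ℝ) 1, 0 ≤ κ μ) ∧
    ∀ v' : Sph n, ∫ v, κ (inner ℝ (v : Euc n) (v' : Euc n)) ∂(sphμ n) = 1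

/-- The path-length density `p` has tail exponent `α` with coefficient `d₀`:
`p(s) = d₀ s^{−(α+1)}` for all `s > 1`. -/
def HasTailExponent (p : ℝ → ℝ) (α d₀ : ℝ) : Prop :=
  ∀ s : ℝ, 1 < s → p s = d₀ / s ^ (α + 1)

/-!
Since `κ(v' · v)` is a probability density in `v`, it suffices to bound the inner integral
uniformly in `v`, i.e. to show `∫₀^∞ p(s) |cos(us) - 1| ds ≤ C |u|^α` for `u = ε (v · ξ)`.
On `(0, 1]` this follows from `|cos x - 1| ≤ 2 |x|^α` and `∫ p = 1`. On `(1, ∞)` we have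
`p(s) = d₀ s^{-(α+1)}`, and the substitution `t = |u| s` turns the integral into
`d₀ |u|^α ∫_{|u|}^∞ t^{-(α+1)} |cos t - 1| dt`; the same integral over all of `(0, ∞)` is
finite since `|cos t - 1| ≤ min (2, t² / 2)` and `0 < α < 2`.
-/

namespace Real

lemma abs_cos_sub_one_le_two (x : ℝ) : |cos x - 1| ≤ 2 := by
  rw [abs_sub_le_iff]
  constructor <;> linarith [cos_le_one x, neg_one_le_cos x]

lemma abs_cos_sub_one_le_sq_div_two (x : ℝ) : |cos x - 1| ≤ x ^ 2 / 2 := by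
  rw [abs_of_nonpos (by linarith [cos_le_one x])]
  linarith [one_sub_sq_div_two_le_cos (x := x)]

lemma abs_cos_sub_one_le_rpow {β : ℝ} (hβ₀ : 0 ≤ β) (hβ₂ : β ≤ 2) (x : ℝ) :
    |cos x - 1| ≤ 2 * |x| ^ β := by
  rcases le_total |x| 1 with hx | hx
  · calc |cos x - 1| ≤ |x| ^ (2 : ℝ) / 2 := by
          rw [rpow_two, sq_abs]; exact abs_cos_sub_one_le_sq_div_two x
      _ ≤ |x| ^ β / 2 := by gcongr 1; exact rpow_le_rpow_of_exponent_ge' (abs_nonneg x) hx hβ₀ hβ₂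
      _ ≤ 2 * |x| ^ β := by linarith [rpow_nonneg (abs_nonneg x) β]
  · calc |cos x - 1| ≤ 2 := abs_cos_sub_one_le_two x
      _ ≤ 2 * |x| ^ β := by linarith [one_le_rpow hx hβ₀]

end Real

open Real

def cosTailConstant (α : ℝ) : ℝ := ∫ t in Ioi 0, t ^ (-(α + 1)) * |cos t - 1|

lemma cosTailConstant_nonneg (α : ℝ) : 0 ≤ cosTailConstant α :=
  setIntegral_nonneg measurableSet_Ioi fun _ ht =>
    mul_nonneg (rpow_nonneg (le_of_lt ht) _) (abs_nonneg _)

lemma integrableOn_rpow_mul_abs_cos_sub_one {α : ℝ} (hα₀ : 0 < α) (hα₂ : α < 2) :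
    IntegrableOn (fun t => t ^ (-(α + 1)) * |cos t - 1|) (Ioi 0) := by
  have hmeas : Measurable fun t : ℝ => t ^ (-(α + 1)) * |cos t - 1| := by fun_prop
  rw [← Ioc_union_Ioi_eq_Ioi zero_le_one]
  refine IntegrableOn.union ?_ ?_
  · have hdom : IntegrableOn (fun t : ℝ => 2 * t ^ (1 - α)) (Ioc 0 1) := by
      rw [← intervalIntegrable_iff_integrableOn_Ioc_of_le zero_le_one]
      exact (intervalIntegral.intervalIntegrable_rpow' (by linarith)).const_mul 2
    refine hdom.mono' hmeas.aestronglyMeasurable.restrict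
      ((ae_restrict_iff' measurableSet_Ioc).2 (.of_forall fun t ht => ?_))
    have ht₀ : 0 < t := ht.1
    calc ‖t ^ (-(α + 1)) * |cos t - 1|‖ = t ^ (-(α + 1)) * |cos t - 1| := by
          rw [Real.norm_eq_abs, abs_mul, abs_abs, abs_of_pos (rpow_pos_of_pos ht₀ _)]
      _ ≤ t ^ (-(α + 1)) * (2 * |t| ^ (2 : ℝ)) := by
          gcongr; exact abs_cos_sub_one_le_rpow (by norm_num) le_rfl t
      _ = 2 * t ^ (1 - α) := by
          rw [abs_of_pos ht₀, mul_left_comm, ← rpow_add ht₀]; ring_nf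
  · have hdom := (integrableOn_Ioi_rpow_of_lt (a := -(α + 1)) (by linarith) zero_lt_one).const_mul 2
    refine hdom.mono' hmeas.aestronglyMeasurable.restrict
      ((ae_restrict_iff' measurableSet_Ioi).2 (.of_forall fun t ht => ?_))
    have ht₀ : (0 : ℝ) < t := zero_lt_one.trans ht
    rw [Real.norm_eq_abs, abs_mul, abs_abs, abs_of_pos (rpow_pos_of_pos ht₀ _), mul_comm]
    gcongr
    exact abs_cos_sub_one_le_two t

lemma setIntegral_Ioi_one_rpow_mul_abs_cos_sub_one_le {α u : ℝ} (hα₀ : 0 < α) (hα₂ : α < 2)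
    (hu : 0 < u) :
    ∫ s in Ioi 1, s ^ (-(α + 1)) * |cos (u * s) - 1| ≤ cosTailConstant α * u ^ α := by
  set h : ℝ → ℝ := fun t => t ^ (-(α + 1)) * |cos t - 1|
  have h_nonneg : ∀ t ∈ Ioi (0 : ℝ), 0 ≤ h t := fun t ht =>
    mul_nonneg (rpow_nonneg (le_of_lt ht) _) (abs_nonneg _)
  have h_rescale : ∀ s ∈ Ioi (1 : ℝ),
      s ^ (-(α + 1)) * |cos (u * s) - 1| = u ^ (α + 1) * h (u * s) := by
    intro s hs
    have hs₀ : (0 : ℝ) < s := zero_lt_one.trans hs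
    simp only [h, mul_rpow hu.le hs₀.le, ← mul_assoc, rpow_neg hu.le,
      mul_inv_cancel₀ (rpow_pos_of_pos hu _).ne', one_mul]
  calc ∫ s in Ioi 1, s ^ (-(α + 1)) * |cos (u * s) - 1|
      = ∫ s in Ioi 1, u ^ (α + 1) * h (u * s) := setIntegral_congr_fun measurableSet_Ioi h_rescale
    _ = u ^ α * ∫ t in Ioi u, h t := by
        rw [integral_const_mul, integral_comp_mul_left_Ioi h 1 hu, smul_eq_mul, mul_one,
          rpow_add_one hu.ne', mul_assoc, mul_inv_cancel_left₀ hu.ne']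
    _ ≤ u ^ α * cosTailConstant α := by
        gcongr
        exact setIntegral_mono_set (integrableOn_rpow_mul_abs_cos_sub_one hα₀ hα₂)
          ((ae_restrict_iff' measurableSet_Ioi).2 (.of_forall h_nonneg))
          (Ioi_subset_Ioi hu.le).eventuallyLE
    _ = cosTailConstant α * u ^ α := mul_comm _ _

lemma abs_integral_mul_le_of_integral_eq_one {X : Type*} [MeasurableSpace X] {μ : Measure X}
    {w g : X → ℝ} {C : ℝ} (hw₀ : ∀ x, 0 ≤ w x) (hw₁ : ∫ x, w x ∂μ = 1) (hg : ∀ x, |g x| ≤ C) :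
    |∫ x, w x * g x ∂μ| ≤ C := by
  have hw : Integrable w μ := Integrable.of_integral_ne_zero (by rw [hw₁]; exact one_ne_zero)
  calc |∫ x, w x * g x ∂μ| ≤ ∫ x, |w x * g x| ∂μ := abs_integral_le_integral_abs
    _ ≤ ∫ x, w x * C ∂μ := by
        refine integral_mono_of_nonneg (.of_forall fun _ => abs_nonneg _) (hw.mul_const C)
          (.of_forall fun x => ?_)
        dsimp only
        rw [abs_mul, abs_of_nonneg (hw₀ x)]
        exact mul_le_mul_of_nonneg_left (hg x) (hw₀ x)
    _ = C := by rw [integral_mul_const, hw₁, one_mul]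

namespace IsPathDensity

variable {p : ℝ → ℝ} {α d₀ : ℝ}

lemma integrableOn (hp : IsPathDensity p) : IntegrableOn p (Ioi 0) :=
  Integrable.of_integral_ne_zero (by rw [hp.2.2.1]; exact one_ne_zero)

lemma setIntegral_Ioc_mul_abs_cos_sub_one_le (hp : IsPathDensity p) (hα₀ : 0 ≤ α)
    (hα₂ : α ≤ 2) (u : ℝ) :
    ∫ s in Ioc 0 1, p s * |cos (u * s) - 1| ≤ 2 * |u| ^ α := by
  have hp_int := hp.integrableOn
  obtain ⟨-, hp₀, hp₁, -⟩ := hp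
  have h_pointwise : ∀ s ∈ Ioc (0 : ℝ) 1, p s * |cos (u * s) - 1| ≤ 2 * |u| ^ α * p s := by
    rintro s ⟨hs₀, hs₁⟩
    calc p s * |cos (u * s) - 1| ≤ p s * (2 * (|u| ^ α * s ^ α)) := by
          rw [← mul_rpow (abs_nonneg u) hs₀.le, ← abs_of_pos hs₀, ← abs_mul, abs_of_pos hs₀]
          exact mul_le_mul_of_nonneg_left (abs_cos_sub_one_le_rpow hα₀ hα₂ _) (hp₀ s)
      _ ≤ p s * (2 * (|u| ^ α * 1)) := by
          gcongr
          · exact hp₀ s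
          · exact rpow_le_one hs₀.le hs₁ hα₀
      _ = 2 * |u| ^ α * p s := by ring
  calc ∫ s in Ioc 0 1, p s * |cos (u * s) - 1|
      ≤ ∫ s in Ioc 0 1, 2 * |u| ^ α * p s :=
        integral_mono_of_nonneg (.of_forall fun s => mul_nonneg (hp₀ s) (abs_nonneg _))
          ((hp_int.mono_set Ioc_subset_Ioi_self).const_mul _)
          ((ae_restrict_iff' measurableSet_Ioc).2 (.of_forall h_pointwise))
    _ ≤ 2 * |u| ^ α * ∫ s in Ioi 0, p s := by
        rw [integral_const_mul]
        refine mul_le_mul_of_nonneg_left ?_ (by positivity)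
        exact setIntegral_mono_set hp_int (.of_forall hp₀) Ioc_subset_Ioi_self.eventuallyLE
    _ = 2 * |u| ^ α := by rw [hp₁, mul_one]

lemma setIntegral_mul_abs_cos_sub_one_le (hp : IsPathDensity p) (htail : HasTailExponent p α d₀)
    (hd₀ : 0 ≤ d₀) (hα₀ : 0 < α) (hα₂ : α < 2) (u : ℝ) :
    ∫ s in Ioi 0, p s * |cos (u * s) - 1| ≤ (2 + d₀ * cosTailConstant α) * |u| ^ α := by
  rcases eq_or_ne u 0 with rfl | hu
  · simp [zero_rpow hα₀.ne']
  have h_int : IntegrableOn (fun s => p s * |cos (u * s) - 1|) (Ioi 0) := by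
    have hp_meas : Measurable p := hp.1
    refine (hp.integrableOn.mul_const 2).mono' (by fun_prop) (.of_forall fun s => ?_)
    rw [Real.norm_eq_abs, abs_mul, abs_abs, abs_of_nonneg (hp.2.1 s)]
    exact mul_le_mul_of_nonneg_left (abs_cos_sub_one_le_two _) (hp.2.1 s)
  have h_tail : ∀ s ∈ Ioi (1 : ℝ),
      p s * |cos (u * s) - 1| = d₀ * (s ^ (-(α + 1)) * |cos (|u| * s) - 1|) := by
    intro s hs
    have hs₀ : (0 : ℝ) < s := zero_lt_one.trans hs
    rw [htail s hs, rpow_neg hs₀.le, ← cos_abs (u * s), abs_mul, abs_of_pos hs₀]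
    ring
  rw [← Ioc_union_Ioi_eq_Ioi zero_le_one,
    setIntegral_union (Ioc_disjoint_Ioi le_rfl) measurableSet_Ioi
      (h_int.mono_set Ioc_subset_Ioi_self) (h_int.mono_set (Ioi_subset_Ioi zero_le_one)),
    setIntegral_congr_fun measurableSet_Ioi h_tail, integral_const_mul, add_mul, mul_assoc]
  gcongr
  · exact hp.setIntegral_Ioc_mul_abs_cos_sub_one_le hα₀.le hα₂.le u
  · exact setIntegral_Ioi_one_rpow_mul_abs_cos_sub_one_le hα₀ hα₂ (abs_pos.2 hu)

lemma abs_setIntegral_mul_cos_sub_one_div_le (hp : IsPathDensity p)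
    (htail : HasTailExponent p α d₀) (hd₀ : 0 ≤ d₀) (hα₀ : 0 < α) (hα₂ : α < 2)
    {ε : ℝ} (hε : 0 < ε) (b : ℝ) :
    |∫ s in Ioi 0, p s * (cos (ε * b * s) - 1) / ε ^ α| ≤
      (2 + d₀ * cosTailConstant α) * |b| ^ α := by
  have hεα : 0 < ε ^ α := rpow_pos_of_pos hε α
  calc |∫ s in Ioi 0, p s * (cos (ε * b * s) - 1) / ε ^ α|
      ≤ ∫ s in Ioi 0, |p s * (cos (ε * b * s) - 1) / ε ^ α| := abs_integral_le_integral_abs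
    _ = (∫ s in Ioi 0, p s * |cos (ε * b * s) - 1|) / ε ^ α := by
        rw [← integral_div]
        refine integral_congr_ae (.of_forall fun s => ?_)
        simp only [abs_div, abs_mul, abs_of_nonneg (hp.2.1 s), abs_of_pos hεα]
    _ ≤ (2 + d₀ * cosTailConstant α) * |ε * b| ^ α / ε ^ α := by
        gcongr
        exact hp.setIntegral_mul_abs_cos_sub_one_le htail hd₀ hα₀ hα₂ (ε * b)
    _ = (2 + d₀ * cosTailConstant α) * |b| ^ α := by
        rw [abs_mul, abs_of_pos hε, mul_rpow hε.le (abs_nonneg b)]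
        field_simp

end IsPathDensity

lemma IsAngularKernel.nonneg_inner {n : ℕ} {κ : ℝ → ℝ} (hκ : IsAngularKernel n κ) (v w : Sph n) :
    0 ≤ κ (inner ℝ (v : Euc n) (w : Euc n)) := by
  refine hκ.2.1 _ (abs_le.1 ?_)
  simpa [norm_eq_of_mem_sphere] using abs_real_inner_le_norm (v : Euc n) (w : Euc n)

theorem lambda_bound_heavy_tail_general
    (n : ℕ) (α : ℝ) (hα : 1 < α ∧ α < 2)
    (κ : ℝ → ℝ) (hκ : IsAngularKernel n κ)
    (p : ℝ → ℝ) (hp : IsPathDensity p)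
    (d₀ : ℝ) (hd₀ : 0 < d₀) (htail : HasTailExponent p α d₀) :
    ∃ c₀ : ℝ, 0 < c₀ ∧
      ∀ ε ∈ Set.Ioo (0 : ℝ) 1, ∀ ξ : Euc n, ∀ v' : Sph n,
        |∫ v : Sph n, ∫ s in Set.Ioi (0 : ℝ),
            κ (inner ℝ (v' : Euc n) (v : Euc n)) * p s *
              (Real.cos (ε * inner ℝ (v : Euc n) ξ * s) - 1) / ε ^ α ∂volume ∂(sphμ n)| ≤
          c₀ * ‖ξ‖ ^ α := by
  obtain ⟨hα₁, hα₂⟩ := hα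
  have hα₀ : 0 < α := zero_lt_one.trans hα₁
  set C := 2 + d₀ * cosTailConstant α
  have hC : 0 < C := by have := cosTailConstant_nonneg α; positivity
  refine ⟨C, hC, ?_⟩
  rintro ε ⟨hε, -⟩ ξ v'
  have h_inner : ∀ v : Sph n,
      |∫ s in Ioi 0, p s * (cos (ε * inner ℝ (v : Euc n) ξ * s) - 1) / ε ^ α| ≤ C * ‖ξ‖ ^ α := by
    intro v
    refine (hp.abs_setIntegral_mul_cos_sub_one_div_le htail hd₀.le hα₀ hα₂ hε _).trans ?_
    refine mul_le_mul_of_nonneg_left (rpow_le_rpow (abs_nonneg _) ?_ hα₀.le) hC.le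
    simpa [norm_eq_of_mem_sphere] using abs_real_inner_le_norm (v : Euc n) ξ
  have h_factor : ∀ v : Sph n,
      ∫ s in Ioi 0, κ (inner ℝ (v' : Euc n) (v : Euc n)) * p s *
          (cos (ε * inner ℝ (v : Euc n) ξ * s) - 1) / ε ^ α =
        κ (inner ℝ (v : Euc n) (v' : Euc n)) *
          ∫ s in Ioi 0, p s * (cos (ε * inner ℝ (v : Euc n) ξ * s) - 1) / ε ^ α := by
    intro v
    rw [real_inner_comm, ← integral_const_mul]
    simp only [mul_assoc, mul_div_assoc]
  simp only [h_factor]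
  exact abs_integral_mul_le_of_integral_eq_one (fun v => hκ.nonneg_inner v v') (hκ.2.2 v') h_inner

/-- Proposition 4.5 (b1): uniform bound `|Λ_ε| ≤ c₀ |ξ|^α` in the
heavy-tail case `1 < α < 2`, `θ(ε) = ε^α`. -/
theorem lambda_bound_heavy_tail
    (n : ℕ) (hn : 2 ≤ n) (α : ℝ) (hα : 1 < α ∧ α < 2)
    (κ : ℝ → ℝ) (hκ : IsAngularKernel n κ)
    (p : ℝ → ℝ) (hp : IsPathDensity p)
    (d₀ : ℝ) (hd₀ : 0 < d₀) (htail : HasTailExponent p α d₀) :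
    ∃ c₀ : ℝ, 0 < c₀ ∧
      ∀ ε ∈ Set.Ioo (0 : ℝ) 1, ∀ ξ : Euc n, ∀ v' : Sph n,
        |∫ v : Sph n, ∫ s in Set.Ioi (0 : ℝ),
            κ (inner ℝ (v' : Euc n) (v : Euc n)) * p s *
              (Real.cos (ε * inner ℝ (v : Euc n) ξ * s) - 1) / ε ^ α ∂volume ∂(sphμ n)| ≤
          c₀ * ‖ξ‖ ^ α :=
  lambda_bound_heavy_tail_general n α hα κ hκ p hp d₀ hd₀ htail
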